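/- Let X be a regular Hausdorff weakly first countable topological space in which every point has a countably compact neighborhood. Then X × Y is weakly first countable for every weakly first countable topological space Y. -/

import Mathlib

open Filter Topology

/-- A weak base for a topological space: a family of filter bases `B x` with
`x` in every member, such that a set is open iff it absorbs a member of `B x`
at each of its points. -/
def IsWeakBase {X : Type*} [TopologicalSpace X] (B : X → Set (Set X)) : Prop :=
  (∀ x, (B x).Nonempty) ∧
  (∀ x, ∀ V₁ ∈ B x, ∀ V₂ ∈ B x, ∃ W ∈ B x, W ⊆ V₁ ∩ V₂) ∧
  (∀ x, ∀ V ∈ B x, x ∈ V) ∧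
  (∀ U : Set X, IsOpen U ↔ ∀ x ∈ U, ∃ V ∈ B x, V ⊆ U)

/-- A topological space is weakly first countable if it has a weak base with
`B x` countable for every `x`. -/
def WeaklyFirstCountable (X : Type*) [TopologicalSpace X] : Prop :=
  ∃ B : X → Set (Set X), IsWeakBase B ∧ ∀ x, (B x).Countable

universe u

/-- A subset is countably compact if every countable open cover has a finite subcover. -/
def CountablyCompactSet {X : Type*} [TopologicalSpace X] (K : Set X) : Prop :=
  ∀ U : ℕ → Set X, (∀ n, IsOpen (U n)) → K ⊆ ⋃ n, U n →
    ∃ t : Finset ℕ, K ⊆ ⋃ n ∈ t, U n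

/-!
The weak base of `X × Y` at `(x, y)` consists of the products `U ×ˢ V` of members of the weak
bases at `x` and `y`. The point is that a set `W` absorbing such products is open. Its sections
`{x | (x, y) ∈ W}` are open, so by regularity `x` has a closed countably compact neighbourhood `C`
inside its section, and it suffices that `{y | C ×ˢ {y} ⊆ W}` is open in `Y`. Otherwise, by
countability of the weak base of `Y`, some `y_n` converging weakly to `y` have witnesses
`c_n ∈ C` with `(c_n, y_n) ∉ W`. As `X` is sequential and Hausdorff, `C` is sequentially compact,
so `c_n → z ∈ C` along a subsequence; and a sequence converging to `z` meets every member of the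
weak base at `z` infinitely often, which contradicts `U ×ˢ V ⊆ W` for some `U ×ˢ V ∋ (z, y)`.
-/

open Set

lemma exists_frequently_eq_or_tendsto_cofinite {α : Type*} (f : ℕ → α) :
    (∃ a, ∃ᶠ n in atTop, f n = a) ∨ Tendsto f atTop cofinite := by
  rw [or_iff_not_imp_left, not_exists]
  exact fun h => le_cofinite_iff_eventually_ne.mpr fun a => not_frequently.mp (h a)

section

variable {X : Type*} [TopologicalSpace X]

def weakNhds (B : X → Set (Set X)) (x : X) : Filter X := ⨅ V ∈ B x, 𝓟 V

namespace IsWeakBase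

variable {B : X → Set (Set X)}

theorem nonempty (hB : IsWeakBase B) (x : X) : (B x).Nonempty :=
  hB.1 x

theorem exists_subset_inter (hB : IsWeakBase B) {x : X} {V₁ V₂ : Set X} (h₁ : V₁ ∈ B x)
    (h₂ : V₂ ∈ B x) : ∃ W ∈ B x, W ⊆ V₁ ∩ V₂ :=
  hB.2.1 x V₁ h₁ V₂ h₂

theorem mem_of_mem (hB : IsWeakBase B) {x : X} {V : Set X} (hV : V ∈ B x) : x ∈ V :=
  hB.2.2.1 x V hV

theorem isOpen_iff (hB : IsWeakBase B) {U : Set X} :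
    IsOpen U ↔ ∀ x ∈ U, ∃ V ∈ B x, V ⊆ U :=
  hB.2.2.2 U

theorem hasBasis_weakNhds (hB : IsWeakBase B) (x : X) : (weakNhds B x).HasBasis (· ∈ B x) id :=
  hasBasis_biInf_principal'
    (fun _ hV₁ _ hV₂ => (hB.exists_subset_inter hV₁ hV₂).imp fun _ ⟨hW, hsub⟩ =>
      ⟨hW, subset_inter_iff.mp hsub⟩)
    (hB.nonempty x)

theorem weakNhds_le_nhds (hB : IsWeakBase B) (x : X) : weakNhds B x ≤ 𝓝 x :=
  (nhds_basis_opens x).ge_iff.mpr fun _ ⟨hxU, hU⟩ =>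
    (hB.hasBasis_weakNhds x).mem_iff.mpr (hB.isOpen_iff.mp hU x hxU)

theorem exists_seq_tendsto_weakNhds (hB : IsWeakBase B) {x : X} (hc : (B x).Countable)
    {U : Set X} (hU : ∀ V ∈ B x, ¬V ⊆ U) :
    ∃ s : ℕ → X, (∀ n, s n ∉ U) ∧ Tendsto s atTop (weakNhds B x) := by
  have : (weakNhds B x).IsCountablyGenerated := isCountablyGenerated_biInf_principal hc
  obtain ⟨W, hWB, hW⟩ := (hB.hasBasis_weakNhds x).exists_antitone_subbasis
  choose s hsW hsU using fun n => not_subset.mp (hU (W n) (hWB n))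
  exact ⟨s, hsU, hW.tendsto hsW⟩

theorem sequentialSpace (hB : IsWeakBase B) (hc : ∀ x, (B x).Countable) :
    SequentialSpace X where
  isClosed_of_seq A hA := by
    refine isOpen_compl_iff.mp (hB.isOpen_iff.mpr fun x hx => ?_)
    by_contra! h
    obtain ⟨s, hsA, hs⟩ := hB.exists_seq_tendsto_weakNhds (hc x) h
    exact hx (hA (fun n => not_not.mp (hsA n)) (hs.mono_right (hB.weakNhds_le_nhds x)))

theorem exists_mem_of_tendsto [T2Space X] (hB : IsWeakBase B) {s : ℕ → X} {x : X}
    (hs : Tendsto s atTop (𝓝 x)) {V : Set X} (hV : V ∈ B x) : ∃ n, s n ∈ V := by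
  by_contra! hsV
  have hxs : x ∉ range s := fun ⟨n, hn⟩ => hsV n (hn ▸ hB.mem_of_mem hV)
  -- `insert x (range s)` is compact, so only the point `x` can obstruct openness of `(range s)ᶜ`
  have hopen : IsOpen (range s)ᶜ := by
    refine hB.isOpen_iff.mpr fun z hz => ?_
    by_cases hzx : z = x
    · exact hzx ▸ ⟨V, hV, fun y hy ⟨n, hn⟩ => hsV n (hn ▸ hy)⟩
    · obtain ⟨W, hW, hWsub⟩ := hB.isOpen_iff.mp hs.isCompact_insert_range.isClosed.isOpen_compl z
        (not_or.mpr ⟨hzx, hz⟩)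
      exact ⟨W, hW, hWsub.trans (compl_subset_compl.mpr (subset_insert _ _))⟩
  obtain ⟨n, hn⟩ := (hs.eventually (hopen.mem_nhds hxs)).exists
  exact hn ⟨n, rfl⟩

theorem frequently_mem_of_tendsto [T2Space X] (hB : IsWeakBase B) {s : ℕ → X} {x : X}
    (hs : Tendsto s atTop (𝓝 x)) {V : Set X} (hV : V ∈ B x) : ∃ᶠ n in atTop, s n ∈ V :=
  frequently_atTop.mpr fun N =>
    let ⟨n, hn⟩ := hB.exists_mem_of_tendsto (hs.comp (tendsto_add_atTop_nat N)) hV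
    ⟨n + N, le_add_self, hn⟩

end IsWeakBase

theorem CountablyCompactSet.of_isClosed_subset {K C : Set X} (hK : CountablyCompactSet K)
    (hC : IsClosed C) (hCK : C ⊆ K) : CountablyCompactSet C := by
  intro U hU hCU
  obtain ⟨t, ht⟩ := hK (fun n => U n ∪ Cᶜ) (fun n => (hU n).union hC.isOpen_compl) fun x _ => by
    by_cases hx : x ∈ C
    · obtain ⟨n, hn⟩ := mem_iUnion.mp (hCU hx)
      exact mem_iUnion.mpr ⟨n, .inl hn⟩
    · exact mem_iUnion.mpr ⟨0, .inr hx⟩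
  refine ⟨t, fun x hx => ?_⟩
  obtain ⟨n, hn, hxn⟩ := mem_iUnion₂.mp (ht (hCK hx))
  exact mem_iUnion₂.mpr ⟨n, hn, hxn.resolve_right (not_not.mpr hx)⟩

theorem isClosed_image_of_forall_not_tendsto [SequentialSpace X] [T1Space X] {u : ℕ → X}
    (hu : ∀ z (φ : ℕ → ℕ), Tendsto φ atTop atTop → ¬Tendsto (u ∘ φ) atTop (𝓝 z)) (I : Set ℕ) :
    IsClosed (u '' I) := by
  refine IsSeqClosed.isClosed fun s z hs hsz => ?_
  choose m hmI hm using hs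
  rcases exists_frequently_eq_or_tendsto_cofinite m with ⟨j, hj⟩ | hmcof
  · obtain ⟨φ, hφ, hφj⟩ := extraction_of_frequently_atTop hj
    have hconst : Tendsto (fun _ : ℕ => u j) atTop (𝓝 z) := by
      simpa [Function.comp_def, ← hm, hφj] using hsz.comp hφ.tendsto_atTop
    exact ⟨j, hφj 0 ▸ hmI (φ 0), tendsto_const_nhds_iff.mp hconst⟩
  · rw [Nat.cofinite_eq_atTop] at hmcof
    exact absurd (by simpa [Function.comp_def, hm] using hsz) (hu z m hmcof)

theorem CountablyCompactSet.exists_tendsto_subseq [SequentialSpace X] [T1Space X] {C : Set X}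
    (hcc : CountablyCompactSet C) (hC : IsClosed C) {u : ℕ → X} (hu : ∀ n, u n ∈ C) :
    ∃ z ∈ C, ∃ φ : ℕ → ℕ, Tendsto φ atTop atTop ∧ Tendsto (u ∘ φ) atTop (𝓝 z) := by
  by_contra! hnot
  replace hnot : ∀ z (φ : ℕ → ℕ), Tendsto φ atTop atTop → ¬Tendsto (u ∘ φ) atTop (𝓝 z) :=
    fun z φ hφ hz => hnot z (hC.mem_of_tendsto hz (.of_forall fun n => hu (φ n))) φ hφ hz
  rcases exists_frequently_eq_or_tendsto_cofinite u with ⟨a, ha⟩ | hcof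
  · obtain ⟨φ, hφ, hφa⟩ := extraction_of_frequently_atTop ha
    exact hnot a φ hφ.tendsto_atTop (by simp [Function.comp_def, hφa])
  · -- the tails `u '' Ici n` are closed and have empty intersection
    obtain ⟨t, ht⟩ := hcc (fun n => (u '' Ici n)ᶜ)
      (fun n => (isClosed_image_of_forall_not_tendsto hnot _).isOpen_compl) fun x _ => by
        obtain ⟨N, hN⟩ := eventually_atTop.mp (le_cofinite_iff_eventually_ne.mp hcof x)
        exact mem_iUnion.mpr ⟨N, fun ⟨n, hn, hnx⟩ => hN n hn hnx⟩
    obtain ⟨n, hn, hun⟩ := mem_iUnion₂.mp (ht (hu (t.sup id)))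
    exact hun ⟨t.sup id, Finset.le_sup (f := id) hn, rfl⟩

section Prod

variable [SequentialSpace X] [T2Space X] {Y : Type*} [TopologicalSpace Y]
  {BX : X → Set (Set X)} {BY : Y → Set (Set Y)}

theorem isOpen_setOf_forall_prod_mem (hBX : IsWeakBase BX) (hBY : IsWeakBase BY)
    (hcY : ∀ y, (BY y).Countable) {W : Set (X × Y)}
    (hW : ∀ p ∈ W, ∃ U ∈ BX p.1, ∃ V ∈ BY p.2, U ×ˢ V ⊆ W)
    {C : Set X} (hcc : CountablyCompactSet C) (hC : IsClosed C) :
    IsOpen {y | ∀ c ∈ C, (c, y) ∈ W} := by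
  refine hBY.isOpen_iff.mpr fun y hy => ?_
  by_contra! h
  obtain ⟨t, htW, ht⟩ := hBY.exists_seq_tendsto_weakNhds (hcY y) h
  choose c hcC hcW using fun n => by simpa using htW n
  obtain ⟨z, hzC, φ, hφ, hcz⟩ := hcc.exists_tendsto_subseq hC hcC
  obtain ⟨U, hU, V, hV, hUV⟩ := hW (z, y) (hy z hzC)
  have htV : ∀ᶠ n in atTop, t (φ n) ∈ V :=
    hφ.eventually ((hBY.hasBasis_weakNhds y).tendsto_right_iff.mp ht V hV)
  obtain ⟨n, hcU, htV⟩ := ((hBX.frequently_mem_of_tendsto hcz hU).and_eventually htV).exists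
  exact hcW (φ n) (hUV ⟨hcU, htV⟩)

theorem isOpen_of_forall_exists_prod_subset [RegularSpace X] (hBX : IsWeakBase BX)
    (hBY : IsWeakBase BY) (hcY : ∀ y, (BY y).Countable)
    (hlcc : ∀ x : X, ∃ K ∈ 𝓝 x, CountablyCompactSet K) {W : Set (X × Y)}
    (hW : ∀ p ∈ W, ∃ U ∈ BX p.1, ∃ V ∈ BY p.2, U ×ˢ V ⊆ W) : IsOpen W := by
  refine isOpen_prod_iff.mpr fun a b hab => ?_
  have hsection : IsOpen {x | (x, b) ∈ W} := hBX.isOpen_iff.mpr fun x hx => by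
    obtain ⟨U, hU, V, hV, hUV⟩ := hW (x, b) hx
    exact ⟨U, hU, fun x' hx' => hUV ⟨hx', hBY.mem_of_mem hV⟩⟩
  obtain ⟨K, hK, hKcc⟩ := hlcc a
  obtain ⟨C, ⟨hC, hCcl⟩, hCsub⟩ :=
    (closed_nhds_basis a).mem_iff.mp (inter_mem (hsection.mem_nhds hab) hK)
  have hCcc : CountablyCompactSet C :=
    hKcc.of_isClosed_subset hCcl fun _ hc => (hCsub hc).2
  refine ⟨interior C, {y | ∀ c ∈ C, (c, y) ∈ W}, isOpen_interior,
    isOpen_setOf_forall_prod_mem hBX hBY hcY hW hCcc hCcl, mem_interior_iff_mem_nhds.mpr hC,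
    fun c hc => (hCsub hc).1, ?_⟩
  rintro ⟨x, y⟩ ⟨hx, hy⟩
  exact hy x (interior_subset hx)

theorem IsWeakBase.prod [RegularSpace X] (hBX : IsWeakBase BX) (hBY : IsWeakBase BY)
    (hcY : ∀ y, (BY y).Countable) (hlcc : ∀ x : X, ∃ K ∈ 𝓝 x, CountablyCompactSet K) :
    IsWeakBase fun p : X × Y => image2 (· ×ˢ ·) (BX p.1) (BY p.2) := by
  refine ⟨fun p => (hBX.nonempty p.1).image2 (hBY.nonempty p.2), ?_, ?_, fun W => ⟨?_, ?_⟩⟩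
  · rintro p _ ⟨U₁, hU₁, V₁, hV₁, rfl⟩ _ ⟨U₂, hU₂, V₂, hV₂, rfl⟩
    obtain ⟨U, hU, hUsub⟩ := hBX.exists_subset_inter hU₁ hU₂
    obtain ⟨V, hV, hVsub⟩ := hBY.exists_subset_inter hV₁ hV₂
    exact ⟨U ×ˢ V, mem_image2_of_mem hU hV, prod_inter_prod ▸ prod_mono hUsub hVsub⟩
  · rintro p _ ⟨U, hU, V, hV, rfl⟩
    exact ⟨hBX.mem_of_mem hU, hBY.mem_of_mem hV⟩
  · intro hW p hp
    obtain ⟨O₁, O₂, hO₁, hO₂, hp₁, hp₂, hO⟩ := isOpen_prod_iff.mp hW p.1 p.2 hp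
    obtain ⟨U, hU, hUO⟩ := hBX.isOpen_iff.mp hO₁ p.1 hp₁
    obtain ⟨V, hV, hVO⟩ := hBY.isOpen_iff.mp hO₂ p.2 hp₂
    exact ⟨U ×ˢ V, mem_image2_of_mem hU hV, (prod_mono hUO hVO).trans hO⟩
  · intro hW
    refine isOpen_of_forall_exists_prod_subset hBX hBY hcY hlcc fun p hp => ?_
    obtain ⟨_, ⟨U, hU, V, hV, rfl⟩, hUV⟩ := hW p hp
    exact ⟨U, hU, V, hV, hUV⟩

end Prod

end

/-- A regular Hausdorff weakly first countable space in which every point has a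
countably compact neighborhood has weakly first countable product with every
weakly first countable space. -/
theorem stmt19 {X : Type u} [TopologicalSpace X] [T2Space X] [RegularSpace X]
    (hw : WeaklyFirstCountable X) (h : ∀ x : X, ∃ K ∈ 𝓝 x, CountablyCompactSet K) :
    ∀ (Y : Type u) [TopologicalSpace Y], WeaklyFirstCountable Y →
      WeaklyFirstCountable (X × Y) := by
  obtain ⟨BX, hBX, hcX⟩ := hw
  have := hBX.sequentialSpace hcX
  rintro Y _ ⟨BY, hBY, hcY⟩
  exact ⟨_, hBX.prod hBY hcY h, fun p => (hcX p.1).image2 (hcY p.2) _⟩
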